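/- At every point of U, ỹ satisfies the Riccati equation along forward characteristics: ỹ_t + c·ỹ_x = ã₀ + ã₁·ỹ + ã₂·ỹ². -/

import Mathlib

open Real

/-- Partial derivative with respect to `t` (the first coordinate). -/
noncomputable def pdt (f : ℝ × ℝ → ℝ) (pt : ℝ × ℝ) : ℝ := fderiv ℝ f pt (1, 0)

/-- Partial derivative with respect to `x` (the second coordinate). -/
noncomputable def pdx (f : ℝ × ℝ → ℝ) (pt : ℝ × ℝ) : ℝ := fderiv ℝ f pt (0, 1)

/-!
Differentiating the three equations in `x` and using the symmetry of second derivatives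
expresses `z_xt`, `u_xt` and `m_xt = 0` through `x`-derivatives alone. Substituting these and
`z_t`, `m_t` into the chain rule for `ỹ_t + c ỹ_x` leaves an algebraic identity; writing every
power of `z` as `(z ^ (κ - 1)) ^ n * z ^ j` with `κ = (γ + 1) / (2 (γ - 1))` turns it into an
identity of rational functions.
-/

open Set

section PartialDerivatives

variable {f g : ℝ × ℝ → ℝ} {pt : ℝ × ℝ}

theorem hasFDerivAt_fderiv_apply (hf : ContDiffAt ℝ 2 f pt) (w : ℝ × ℝ) :
    HasFDerivAt (fun p => fderiv ℝ f p w)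
      ((ContinuousLinearMap.apply ℝ ℝ w).comp (fderiv ℝ (fderiv ℝ f) pt)) pt :=
  (ContinuousLinearMap.apply ℝ ℝ w).hasFDerivAt.comp pt
    ((hf.fderiv_right le_rfl).differentiableAt one_ne_zero).hasFDerivAt

theorem differentiableAt_pdx (hf : ContDiffAt ℝ 2 f pt) : DifferentiableAt ℝ (pdx f) pt :=
  (hasFDerivAt_fderiv_apply hf (0, 1)).differentiableAt

theorem fderiv_fderiv_apply (hf : ContDiffAt ℝ 2 f pt) (v w : ℝ × ℝ) :
    fderiv ℝ (fun p => fderiv ℝ f p w) pt v = fderiv ℝ (fderiv ℝ f) pt v w := by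
  simp [(hasFDerivAt_fderiv_apply hf w).fderiv]

theorem pdt_pdx_comm (hf : ContDiffAt ℝ 2 f pt) : pdt (pdx f) pt = pdx (pdt f) pt := by
  change fderiv ℝ (fun p => fderiv ℝ f p (0, 1)) pt (1, 0)
    = fderiv ℝ (fun p => fderiv ℝ f p (1, 0)) pt (0, 1)
  rw [fderiv_fderiv_apply hf, fderiv_fderiv_apply hf]
  exact hf.isSymmSndFDerivAt (by simp [minSmoothness_of_isRCLikeNormedField]) _ _

theorem pdt_pdx_eq_of_eqOn {U : Set (ℝ × ℝ)} (hU : IsOpen U) (hpt : pt ∈ U)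
    (hf : ContDiffAt ℝ 2 f pt) (h : EqOn (pdt f) g U) : pdt (pdx f) pt = pdx g pt := by
  rw [pdt_pdx_comm hf, pdx, pdx, (h.eventuallyEq_of_mem (hU.mem_nhds hpt)).fderiv_eq]

theorem fderiv_rpow_const_apply (hf : DifferentiableAt ℝ f pt) (hf0 : f pt ≠ 0) (r : ℝ)
    (w : ℝ × ℝ) :
    fderiv ℝ (fun p => f p ^ r) pt w = r * f pt ^ (r - 1) * fderiv ℝ f pt w := by
  rw [(hf.hasFDerivAt.rpow_const (Or.inl hf0)).fderiv]
  simp [mul_assoc]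

end PartialDerivatives

theorem rpow_eq_rpow_pow_mul_pow {x : ℝ} (hx : 0 < x) (a e : ℝ) (n j : ℕ)
    (h : e = a * n + j) : x ^ e = (x ^ a) ^ n * x ^ j := by
  rw [h, rpow_add hx, rpow_mul hx.le, rpow_natCast, rpow_natCast]

section EulerSystem

variable {U : Set (ℝ × ℝ)} {u z m : ℝ × ℝ → ℝ} {pt : ℝ × ℝ}

theorem eqOn_pdt_z {K r : ℝ} (hm : ∀ q ∈ U, m q ≠ 0)
    (h : ∀ q ∈ U, pdt z q + K * m q * z q ^ r / m q * pdx u q = 0) :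
    EqOn (pdt z) (fun q => -(K * z q ^ r * pdx u q)) U := fun q hq => by
  have := h q hq
  field_simp [hm q hq] at this
  linear_combination this

theorem eqOn_pdt_u {K L r s : ℝ}
    (h : ∀ q ∈ U, pdt u q + m q * (K * m q * z q ^ r) * pdx z q
      + 2 * (L * m q ^ 2 * z q ^ s / m q) * pdx m q = 0) :
    EqOn (pdt u) (fun q => -(K * m q ^ 2 * z q ^ r * pdx z q + 2 * L * m q * z q ^ s * pdx m q)) U :=
  fun q hq => by
  have := h q hq
  rw [mul_div_right_comm, mul_div_assoc, sq, mul_self_div_self] at this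
  linear_combination this

theorem pdt_pdx_z_eq (hU : IsOpen U) (hpt : pt ∈ U) (hz2 : ContDiffAt ℝ 2 z pt) (hz0 : z pt ≠ 0)
    (hu2 : ContDiffAt ℝ 2 u pt) {K r : ℝ}
    (hzt : EqOn (pdt z) (fun q => -(K * z q ^ r * pdx u q)) U) :
    pdt (pdx z) pt
      = -(K * (r * z pt ^ (r - 1) * pdx z pt * pdx u pt + z pt ^ r * pdx (pdx u) pt)) := by
  have hz := hz2.differentiableAt two_ne_zero
  have hux := differentiableAt_pdx hu2
  rw [pdt_pdx_eq_of_eqOn hU hpt hz2 hzt, pdx]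
  simp (disch := fun_prop (disch := exact Or.inl hz0)) only [fderiv_fun_neg, fderiv_fun_mul,
    fderiv_rpow_const_apply hz hz0, fderiv_const_apply, neg_apply, add_apply, smul_apply,
    smul_eq_mul, zero_apply]
  simp only [pdx]
  ring

theorem pdt_pdx_u_eq (hU : IsOpen U) (hpt : pt ∈ U) (hu2 : ContDiffAt ℝ 2 u pt)
    (hz2 : ContDiffAt ℝ 2 z pt) (hz0 : z pt ≠ 0) (hm2 : ContDiffAt ℝ 2 m pt) {K L r s : ℝ}
    (hut : EqOn (pdt u)
      (fun q => -(K * m q ^ 2 * z q ^ r * pdx z q + L * m q * z q ^ s * pdx m q)) U) :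
    pdt (pdx u) pt = -(K * (2 * m pt * pdx m pt * z pt ^ r * pdx z pt
        + m pt ^ 2 * (r * z pt ^ (r - 1) * pdx z pt) * pdx z pt
        + m pt ^ 2 * z pt ^ r * pdx (pdx z) pt)
      + L * (pdx m pt * z pt ^ s * pdx m pt + m pt * (s * z pt ^ (s - 1) * pdx z pt) * pdx m pt
        + m pt * z pt ^ s * pdx (pdx m) pt)) := by
  have hz := hz2.differentiableAt two_ne_zero
  have hm := hm2.differentiableAt two_ne_zero
  have hzx := differentiableAt_pdx hz2
  have hmx := differentiableAt_pdx hm2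
  rw [pdt_pdx_eq_of_eqOn hU hpt hu2 hut, pdx]
  simp (disch := fun_prop (disch := exact Or.inl hz0)) only [fderiv_fun_neg, fderiv_fun_add,
    fderiv_fun_mul, fderiv_rpow_const_apply hz hz0, fderiv_fun_pow, fderiv_const_apply,
    neg_apply, add_apply, smul_apply, smul_eq_mul, zero_apply]
  simp only [pdx]
  ring

theorem pdt_pdx_m_eq (hU : IsOpen U) (hpt : pt ∈ U) (hm2 : ContDiffAt ℝ 2 m pt)
    (hmt : EqOn (pdt m) 0 U) : pdt (pdx m) pt = 0 := by
  rw [pdt_pdx_eq_of_eqOn hU hpt hm2 hmt, pdx, Pi.zero_def, fderiv_const_apply, zero_apply]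

theorem fderiv_yTilde_apply (hz : DifferentiableAt ℝ z pt) (hz0 : z pt ≠ 0)
    (hm : DifferentiableAt ℝ m pt) (hux : DifferentiableAt ℝ (pdx u) pt)
    (hzx : DifferentiableAt ℝ (pdx z) pt) (hmx : DifferentiableAt ℝ (pdx m) pt)
    (κ a b : ℝ) (w : ℝ × ℝ) :
    fderiv ℝ (fun p => z p ^ κ * (pdx u p + m p * pdx z p + a * pdx m p * z p)
        + b * z p ^ (κ + 1) * pdx m p) pt w
      = κ * z pt ^ (κ - 1) * fderiv ℝ z pt w * (pdx u pt + m pt * pdx z pt + a * pdx m pt * z pt)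
        + z pt ^ κ * (fderiv ℝ (pdx u) pt w + fderiv ℝ m pt w * pdx z pt
          + m pt * fderiv ℝ (pdx z) pt w
          + a * (fderiv ℝ (pdx m) pt w * z pt + pdx m pt * fderiv ℝ z pt w))
        + b * ((κ + 1) * z pt ^ κ * fderiv ℝ z pt w * pdx m pt
          + z pt ^ (κ + 1) * fderiv ℝ (pdx m) pt w) := by
  simp (disch := fun_prop (disch := exact Or.inl hz0)) only [fderiv_fun_add, fderiv_fun_mul,
    fderiv_rpow_const_apply hz hz0, fderiv_const_apply, add_apply, smul_apply, smul_eq_mul,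
    zero_apply, add_sub_cancel_right]
  ring

end EulerSystem

theorem stmt_7_general
    (γ Kc : ℝ) (hγ : 1 < γ)
    (U : Set (ℝ × ℝ)) (hU : IsOpen U)
    (u z m : ℝ × ℝ → ℝ)
    (hu : ContDiffOn ℝ 2 u U) (hz : ContDiffOn ℝ 2 z U) (hm : ContDiffOn ℝ 2 m U)
    (hzpos : ∀ pt ∈ U, 0 < z pt) (hmpos : ∀ pt ∈ U, 0 < m pt)
    (c p : ℝ × ℝ → ℝ)
    (hc : c = fun pt => Kc * m pt * z pt ^ ((γ + 1) / (γ - 1)))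
    (hp : p = fun pt => ((γ - 1) / (2 * γ) * Kc) * (m pt) ^ 2 * z pt ^ (2 * γ / (γ - 1)))
    (heq1 : ∀ pt ∈ U, pdt z pt + (c pt / m pt) * pdx u pt = 0)
    (heq2 : ∀ pt ∈ U, pdt u pt + m pt * c pt * pdx z pt + 2 * (p pt / m pt) * pdx m pt = 0)
    (heq3 : ∀ pt ∈ U, pdt m pt = 0)
    (α : ℝ × ℝ → ℝ)
    (hα : α = fun pt => pdx u pt + m pt * pdx z pt + ((γ - 1) / γ) * pdx m pt * z pt)
    (yt : ℝ × ℝ → ℝ)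
    (hyt : yt = fun pt => z pt ^ ((γ + 1) / (2 * (γ - 1))) * α pt
      + ((γ - 1) / (γ * (3 * γ - 1))) * z pt ^ ((γ + 1) / (2 * (γ - 1)) + 1) * pdx m pt)
    (a0t : ℝ × ℝ → ℝ)
    (ha0t : a0t = fun pt => (Kc / γ) * (((γ - 1) / (3 * γ - 1)) * m pt * pdx (pdx m) pt
      - ((3 * γ + 1) * (γ - 1) / (3 * γ - 1) ^ 2) * (pdx m pt) ^ 2)
      * z pt ^ (3 * (γ + 1) / (2 * (γ - 1)) + 1))
    (a1t : ℝ × ℝ → ℝ)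
    (ha1t : a1t = fun pt => Kc * (3 * (3 - γ) / (2 * (3 * γ - 1))) * pdx m pt * z pt ^ ((γ + 1) / (γ - 1)))
    (a2t : ℝ × ℝ → ℝ)
    (ha2t : a2t = fun pt => -Kc * ((γ + 1) / (2 * (γ - 1))) * z pt ^ ((γ + 1) / (2 * (γ - 1)) - 1))
 :
    ∀ pt ∈ U, pdt yt pt + c pt * pdx yt pt
      = a0t pt + a1t pt * yt pt + a2t pt * (yt pt) ^ 2 := by
  intro pt hpt
  subst hc hp hα hyt ha0t ha1t ha2t
  have hzt := eqOn_pdt_z (fun q hq => (hmpos q hq).ne') heq1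
  have hz0 := (hzpos pt hpt).ne'
  have hu2 := hu.contDiffAt (hU.mem_nhds hpt)
  have hz2 := hz.contDiffAt (hU.mem_nhds hpt)
  have hm2 := hm.contDiffAt (hU.mem_nhds hpt)
  have hY := fderiv_yTilde_apply (hz2.differentiableAt two_ne_zero) hz0
    (hm2.differentiableAt two_ne_zero) (differentiableAt_pdx hu2) (differentiableAt_pdx hz2)
    (differentiableAt_pdx hm2) ((γ + 1) / (2 * (γ - 1))) ((γ - 1) / γ) ((γ - 1) / (γ * (3 * γ - 1)))
  beta_reduce
  rw [pdt, pdx, hY, hY]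
  simp only [← pdt.eq_1, ← pdx.eq_1]
  rw [hzt hpt, pdt_pdx_z_eq hU hpt hz2 hz0 hu2 hzt,
    pdt_pdx_u_eq hU hpt hu2 hz2 hz0 hm2 (eqOn_pdt_u heq2), heq3 pt hpt,
    pdt_pdx_m_eq hU hpt hm2 heq3]
  beta_reduce
  have hγ1 : γ - 1 ≠ 0 := by linarith
  have hγ0 : γ ≠ 0 := by linarith
  have h3γ : γ * 3 - 1 ≠ 0 := by linarith
  have hpow (e : ℝ) (n j : ℕ) (h : e = ((γ + 1) / (2 * (γ - 1)) - 1) * n + j) :=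
    rpow_eq_rpow_pow_mul_pow (hzpos pt hpt) _ e n j h
  rw [hpow ((γ + 1) / (2 * (γ - 1))) 1 1 (by field_simp; ring),
    hpow ((γ + 1) / (2 * (γ - 1)) + 1) 1 2 (by field_simp; ring),
    hpow ((γ + 1) / (γ - 1)) 2 2 (by field_simp; ring),
    hpow ((γ + 1) / (γ - 1) - 1) 2 1 (by field_simp; ring),
    hpow (2 * γ / (γ - 1)) 2 3 (by field_simp; ring),
    hpow (2 * γ / (γ - 1) - 1) 2 2 (by field_simp; ring),
    hpow (3 * (γ + 1) / (2 * (γ - 1)) + 1) 3 4 (by field_simp; ring)]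
  generalize z pt ^ ((γ + 1) / (2 * (γ - 1)) - 1) = W
  field_simp
  ring

/-- Riccati equation for `ỹ` along forward characteristics:
`ỹ′ = ã₀ + ã₁·ỹ + ã₂·ỹ²` on `U`. -/
theorem stmt_7
    (γ Kc : ℝ) (hγ : 1 < γ) (hKc : 0 < Kc)
    (U : Set (ℝ × ℝ)) (hU : IsOpen U)
    (u z m : ℝ × ℝ → ℝ)
    (hu : ContDiffOn ℝ 2 u U) (hz : ContDiffOn ℝ 2 z U) (hm : ContDiffOn ℝ 2 m U)
    (hzpos : ∀ pt ∈ U, 0 < z pt) (hmpos : ∀ pt ∈ U, 0 < m pt)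
    (c p : ℝ × ℝ → ℝ)
    (hc : c = fun pt => Kc * m pt * z pt ^ ((γ + 1) / (γ - 1)))
    (hp : p = fun pt => ((γ - 1) / (2 * γ) * Kc) * (m pt) ^ 2 * z pt ^ (2 * γ / (γ - 1)))
    (heq1 : ∀ pt ∈ U, pdt z pt + (c pt / m pt) * pdx u pt = 0)
    (heq2 : ∀ pt ∈ U, pdt u pt + m pt * c pt * pdx z pt + 2 * (p pt / m pt) * pdx m pt = 0)
    (heq3 : ∀ pt ∈ U, pdt m pt = 0)
    (α β : ℝ × ℝ → ℝ)
    (hα : α = fun pt => pdx u pt + m pt * pdx z pt + ((γ - 1) / γ) * pdx m pt * z pt)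
    (hβ : β = fun pt => pdx u pt - m pt * pdx z pt - ((γ - 1) / γ) * pdx m pt * z pt)
    (yt qt : ℝ × ℝ → ℝ)
    (hyt : yt = fun pt => z pt ^ ((γ + 1) / (2 * (γ - 1))) * α pt
      + ((γ - 1) / (γ * (3 * γ - 1))) * z pt ^ ((γ + 1) / (2 * (γ - 1)) + 1) * pdx m pt)
    (hqt : qt = fun pt => z pt ^ ((γ + 1) / (2 * (γ - 1))) * β pt
      - ((γ - 1) / (γ * (3 * γ - 1))) * z pt ^ ((γ + 1) / (2 * (γ - 1)) + 1) * pdx m pt)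
    (a0t : ℝ × ℝ → ℝ)
    (ha0t : a0t = fun pt => (Kc / γ) * (((γ - 1) / (3 * γ - 1)) * m pt * pdx (pdx m) pt
      - ((3 * γ + 1) * (γ - 1) / (3 * γ - 1) ^ 2) * (pdx m pt) ^ 2)
      * z pt ^ (3 * (γ + 1) / (2 * (γ - 1)) + 1))
    (a1t : ℝ × ℝ → ℝ)
    (ha1t : a1t = fun pt => Kc * (3 * (3 - γ) / (2 * (3 * γ - 1))) * pdx m pt * z pt ^ ((γ + 1) / (γ - 1)))
    (a2t : ℝ × ℝ → ℝ)
    (ha2t : a2t = fun pt => -Kc * ((γ + 1) / (2 * (γ - 1))) * z pt ^ ((γ + 1) / (2 * (γ - 1)) - 1))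
 :
    ∀ pt ∈ U, pdt yt pt + c pt * pdx yt pt
      = a0t pt + a1t pt * yt pt + a2t pt * (yt pt) ^ 2 :=
  stmt_7_general γ Kc hγ U hU u z m hu hz hm hzpos hmpos c p hc hp heq1 heq2 heq3 α hα yt hyt a0t
    ha0t a1t ha1t a2t ha2t
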